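/- arXiv:2309.00283 — 2 statements merged into one kernel-verified Lean document; each statement's English description precedes it below -/
import Mathlib

section
/- A derivation δ of K_N is inner (i.e., δ = [·, a] for some a ∈ K_N) if and only if there exist complex numbers a^0, a^1, …, a^N such that δ = Σ_i a^i ∂_i + a^0(∂_1^1 + ∂_2^2 + ⋯ + ∂_N^N). -/
open Complex BigOperators

/-- The generalized Kronecker algebra `K_N`: elements `λ•1 + μ•e + ∑ aⁱ αᵢ`
represented by their coefficients. -/
@[ext] structure Kron (N : ℕ) where
  lam : ℂ
  mu : ℂ
  al : Fin N → ℂ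

namespace Kron

variable {N : ℕ}

instance : Zero (Kron N) := ⟨⟨0, 0, fun _ => 0⟩⟩
instance : One (Kron N) := ⟨⟨1, 0, fun _ => 0⟩⟩
instance : Add (Kron N) := ⟨fun x y => ⟨x.lam + y.lam, x.mu + y.mu, fun i => x.al i + y.al i⟩⟩
instance : Neg (Kron N) := ⟨fun x => ⟨-x.lam, -x.mu, fun i => -x.al i⟩⟩
instance : Mul (Kron N) :=
  ⟨fun x y => ⟨x.lam * y.lam, x.lam * y.mu + y.lam * x.mu + x.mu * y.mu,
    fun i => (x.lam + x.mu) * y.al i + y.lam * x.al i⟩⟩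
instance : SMul ℂ (Kron N) := ⟨fun c x => ⟨c * x.lam, c * x.mu, fun i => c * x.al i⟩⟩

@[simp] lemma mk_lam (l m : ℂ) (v : Fin N → ℂ) : (Kron.mk l m v).lam = l := rfl
@[simp] lemma mk_mu (l m : ℂ) (v : Fin N → ℂ) : (Kron.mk l m v).mu = m := rfl
@[simp] lemma mk_al (l m : ℂ) (v : Fin N → ℂ) (i : Fin N) : (Kron.mk l m v).al i = v i := rfl
@[simp] lemma zero_lam : (0 : Kron N).lam = 0 := rfl
@[simp] lemma zero_mu : (0 : Kron N).mu = 0 := rfl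
@[simp] lemma zero_al (i : Fin N) : (0 : Kron N).al i = 0 := rfl
@[simp] lemma one_lam : (1 : Kron N).lam = 1 := rfl
@[simp] lemma one_mu : (1 : Kron N).mu = 0 := rfl
@[simp] lemma one_al (i : Fin N) : (1 : Kron N).al i = 0 := rfl
@[simp] lemma add_lam (x y : Kron N) : (x + y).lam = x.lam + y.lam := rfl
@[simp] lemma add_mu (x y : Kron N) : (x + y).mu = x.mu + y.mu := rfl
@[simp] lemma add_al (x y : Kron N) (i : Fin N) : (x + y).al i = x.al i + y.al i := rfl
@[simp] lemma neg_lam (x : Kron N) : (-x).lam = -x.lam := rfl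
@[simp] lemma neg_mu (x : Kron N) : (-x).mu = -x.mu := rfl
@[simp] lemma neg_al (x : Kron N) (i : Fin N) : (-x).al i = -x.al i := rfl
@[simp] lemma mul_lam (x y : Kron N) : (x * y).lam = x.lam * y.lam := rfl
@[simp] lemma mul_mu (x y : Kron N) :
    (x * y).mu = x.lam * y.mu + y.lam * x.mu + x.mu * y.mu := rfl
@[simp] lemma mul_al (x y : Kron N) (i : Fin N) :
    (x * y).al i = (x.lam + x.mu) * y.al i + y.lam * x.al i := rfl
@[simp] lemma smul_lam (c : ℂ) (x : Kron N) : (c • x).lam = c * x.lam := rfl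
@[simp] lemma smul_mu (c : ℂ) (x : Kron N) : (c • x).mu = c * x.mu := rfl
@[simp] lemma smul_al (c : ℂ) (x : Kron N) (i : Fin N) : (c • x).al i = c * x.al i := rfl

instance : AddCommGroup (Kron N) where
  add_assoc := by intros; ext <;> simp <;> ring
  zero_add := by intros; ext <;> simp
  add_zero := by intros; ext <;> simp
  add_comm := by intros; ext <;> simp <;> ring
  neg_add_cancel := by intros; ext <;> simp
  nsmul := nsmulRec
  zsmul := zsmulRec

instance : Ring (Kron N) :=
  { (inferInstance : AddCommGroup (Kron N)) with
    left_distrib := by intros; ext <;> simp <;> ring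
    right_distrib := by intros; ext <;> simp <;> ring
    zero_mul := by intros; ext <;> simp
    mul_zero := by intros; ext <;> simp
    mul_assoc := by intros; ext <;> simp <;> ring
    one_mul := by intros; ext <;> simp
    mul_one := by intros; ext <;> simp }

instance : Module ℂ (Kron N) where
  one_smul := by intros; ext <;> simp
  mul_smul := by intros; ext <;> simp <;> ring
  smul_zero := by intros; ext <;> simp
  smul_add := by intros; ext <;> simp <;> ring
  add_smul := by intros; ext <;> simp <;> ring
  zero_smul := by intros; ext <;> simp

instance : Algebra ℂ (Kron N) :=
  Algebra.ofModule (fun _ _ _ => by ext <;> simp <;> ring)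
    (fun _ _ _ => by ext <;> simp <;> ring)

/-- The idempotent generator `e`. -/
def e : Kron N := ⟨0, 1, fun _ => 0⟩

/-- The arrow generators `α i`. -/
def α (i : Fin N) : Kron N := ⟨0, 0, fun j => if j = i then 1 else 0⟩

@[simp] lemma e_lam : (e : Kron N).lam = 0 := rfl
@[simp] lemma e_mu : (e : Kron N).mu = 1 := rfl
@[simp] lemma e_al (i : Fin N) : (e : Kron N).al i = 0 := rfl
@[simp] lemma α_lam (i : Fin N) : (α i : Kron N).lam = 0 := rfl
@[simp] lemma α_mu (i : Fin N) : (α i : Kron N).mu = 0 := rfl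
@[simp] lemma α_al (i j : Fin N) : (α i : Kron N).al j = if j = i then 1 else 0 := rfl

/-- The `*`-structure: `(λ1 + μe + aⁱαᵢ)* = (λ̄+μ̄)1 − μ̄e + āⁱαᵢ`. -/
instance : Star (Kron N) :=
  ⟨fun x => ⟨starRingEnd ℂ x.lam + starRingEnd ℂ x.mu, -(starRingEnd ℂ x.mu),
    fun i => starRingEnd ℂ (x.al i)⟩⟩

@[simp] lemma star_lam (x : Kron N) :
    (star x).lam = starRingEnd ℂ x.lam + starRingEnd ℂ x.mu := rfl
@[simp] lemma star_mu (x : Kron N) : (star x).mu = -(starRingEnd ℂ x.mu) := rfl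
@[simp] lemma star_al (x : Kron N) (i : Fin N) : (star x).al i = starRingEnd ℂ (x.al i) := rfl

/-- The derivation `∂_k` with `∂_k e = i α_k`, `∂_k α_l = 0`. -/
def dK (k : Fin N) : Kron N →ₗ[ℂ] Kron N where
  toFun x := ⟨0, 0, fun j => x.mu * Complex.I * (if j = k then 1 else 0)⟩
  map_add' := by intros; ext <;> simp <;> (try split) <;> ring
  map_smul' := by intros; ext <;> simp <;> (try split) <;> ring

/-- The derivation `∂_k^l` with `∂_k^l e = 0`, `∂_k^l α_j = δ_j^l α_k`. -/
def dKK (k l : Fin N) : Kron N →ₗ[ℂ] Kron N where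
  toFun x := ⟨0, 0, fun j => x.al l * (if j = k then 1 else 0)⟩
  map_add' := by intros; ext <;> simp <;> (try split) <;> ring
  map_smul' := by intros; ext <;> simp <;> (try split) <;> ring

end Kron

namespace Kron
variable {N : ℕ}
@[simp] lemma sum_lam {ι : Type*} (s : Finset ι) (f : ι → Kron N) :
    (∑ i ∈ s, f i).lam = ∑ i ∈ s, (f i).lam := by
  induction s using Finset.cons_induction <;> simp [*]
@[simp] lemma sum_mu {ι : Type*} (s : Finset ι) (f : ι → Kron N) :
    (∑ i ∈ s, f i).mu = ∑ i ∈ s, (f i).mu := by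
  induction s using Finset.cons_induction <;> simp [*]
@[simp] lemma sum_al {ι : Type*} (s : Finset ι) (f : ι → Kron N) (j : Fin N) :
    (∑ i ∈ s, f i).al j = ∑ i ∈ s, (f i).al j := by
  induction s using Finset.cons_induction <;> simp [*]
end Kron

/-- a derivation of `K_N` is inner iff it is of the form
`Σ aⁱ∂ᵢ + a⁰(∂₁¹ + ⋯ + ∂_N^N)`. -/
theorem stmt_7 (N : ℕ) (δ : Kron N →ₗ[ℂ] Kron N)
    (hδ : ∀ x y : Kron N, δ (x * y) = δ x * y + x * δ y) :
    (∃ a : Kron N, ∀ x : Kron N, δ x = x * a - a * x) ↔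
    ∃ (c : Fin N → ℂ) (c0 : ℂ),
      δ = (∑ i, c i • Kron.dK i) + c0 • ∑ i, Kron.dKK i i := by

  have hsub : ∀ x a : Kron N, x * a - a * x =
      ⟨0, 0, fun i => x.mu * a.al i - a.mu * x.al i⟩ := by
    intro x a
    ext i <;> simp [sub_eq_add_neg] <;> ring
  have happ : ∀ (c : Fin N → ℂ) (c0 : ℂ) (x : Kron N),
      (((∑ i, c i • Kron.dK i) + c0 • ∑ i, Kron.dKK i i : Kron N →ₗ[ℂ] Kron N) x) =
      ⟨0, 0, fun j => x.mu * Complex.I * c j + c0 * x.al j⟩ := by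
    intro c c0 x
    ext j <;>
      simp [LinearMap.sum_apply, Kron.dK, Kron.dKK, mul_ite,
        Finset.sum_ite_eq', mul_comm, mul_assoc, mul_left_comm]
  constructor
  · rintro ⟨a, ha⟩
    refine ⟨fun i => -Complex.I * a.al i, -a.mu, ?_⟩
    apply LinearMap.ext
    intro x
    rw [happ, ha, hsub]
    ext j <;> simp <;> ring_nf <;> simp [Complex.I_sq] <;> ring
  · rintro ⟨c, c0, rfl⟩
    refine ⟨⟨0, -c0, fun i => Complex.I * c i⟩, fun x => ?_⟩
    rw [happ, hsub]
    ext j <;> simp <;> ring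
end

section
/- The hermitian elements of K_N are exactly those of the form a = (λ − (i/2)μ)1 + iμ e + Σ a^i α_i with λ, μ, a^i real. -/
open Complex BigOperators

lemma kron_sum_lam {N : ℕ} {ι : Type*} (s : Finset ι) (f : ι → Kron N) :
    (∑ i ∈ s, f i).lam = ∑ i ∈ s, (f i).lam := by
  induction s using Finset.cons_induction <;> simp [*]

lemma kron_sum_mu {N : ℕ} {ι : Type*} (s : Finset ι) (f : ι → Kron N) :
    (∑ i ∈ s, f i).mu = ∑ i ∈ s, (f i).mu := by
  induction s using Finset.cons_induction <;> simp [*]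

lemma kron_sum_al {N : ℕ} {ι : Type*} (s : Finset ι) (f : ι → Kron N) (j : Fin N) :
    (∑ i ∈ s, f i).al j = ∑ i ∈ s, (f i).al j := by
  induction s using Finset.cons_induction <;> simp [*]

@[simp] lemma kron_rsmul_lam {N : ℕ} (c : ℝ) (x : Kron N) :
    (c • x).lam = (c : ℂ) * x.lam := rfl

@[simp] lemma kron_rsmul_mu {N : ℕ} (c : ℝ) (x : Kron N) :
    (c • x).mu = (c : ℂ) * x.mu := rfl

@[simp] lemma kron_rsmul_al {N : ℕ} (c : ℝ) (x : Kron N) (j : Fin N) :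
    (c • x).al j = (c : ℂ) * x.al j := rfl

/-- hermitian elements of `K_N` are exactly
`(λ − (i/2)μ)1 + iμe + Σ aⁱαᵢ` with real coefficients. -/
theorem stmt_13 (N : ℕ) (a : Kron N) :
    star a = a ↔
    ∃ (l m : ℝ) (v : Fin N → ℝ),
      a = ((l : ℂ) - Complex.I / 2 * (m : ℂ)) • (1 : Kron N)
        + ((Complex.I * (m : ℂ)) • Kron.e) + ∑ i, ((v i : ℂ)) • Kron.α i := by
  constructor
  · intro h
    have h1 : starRingEnd ℂ a.lam + starRingEnd ℂ a.mu = a.lam := congrArg Kron.lam h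
    have h2 : -(starRingEnd ℂ a.mu) = a.mu := congrArg Kron.mu h
    have h3 : ∀ i, starRingEnd ℂ (a.al i) = a.al i := fun i => congrFun (congrArg Kron.al h) i
    have hmu_re : a.mu.re = 0 := by
      have := congrArg Complex.re h2
      simp [Complex.conj_re] at this
      linarith
    have hlam_im : a.lam.im = -a.mu.im / 2 := by
      have := congrArg Complex.im h1
      simp [Complex.conj_im] at this
      linarith
    refine ⟨a.lam.re, a.mu.im, fun i => (a.al i).re, ?_⟩
    ext j
    · simp only [Kron.add_lam, Kron.smul_lam, Kron.one_lam, Kron.e_lam, kron_sum_lam, Kron.α_lam, mul_zero,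
        Finset.sum_const_zero, add_zero, mul_one]
      apply Complex.ext <;> simp [hlam_im] <;> ring
    · simp only [Kron.add_mu, Kron.smul_mu, Kron.one_mu, Kron.e_mu, kron_sum_mu, Kron.α_mu, mul_zero,
        Finset.sum_const_zero, add_zero, zero_add, mul_one]
      apply Complex.ext <;> simp [hmu_re]
    · simp only [Kron.add_al, Kron.smul_al, Kron.one_al, Kron.e_al, kron_sum_al, Kron.α_al, mul_zero, zero_add,
        mul_ite, mul_one, Finset.sum_ite_eq']
      have : (a.al j).im = 0 := by
        have := congrArg Complex.im (h3 j)
        simp [Complex.conj_im] at this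
        linarith
      simp [Complex.ext_iff, this]
  · rintro ⟨l, m, v, rfl⟩
    ext j <;>
      simp [kron_sum_lam, kron_sum_mu, kron_sum_al, Finset.sum_ite_eq', map_sum,
        Complex.ext_iff, map_ofNat, Complex.inv_re, Complex.inv_im, Complex.normSq] <;>
      ring
end
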